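/- In coordinates (R, θ, φ) obtained from Boyer–Lindquist r via r = R[(1 + m/(2R))² − a²/(4R²)], the stationary Kerr space metric ĝ = (p²/Δ) dr² + p² dθ² + (p²Δ/(p² − 2mr)) sin²θ dφ², with p² = r² + a² cos²θ, equals σ(g̃ + s⊗s), where g̃ = dR² + R² dθ² + R² sin²θ dφ² is flat, σ = p²/R², and s = (a R sin²θ/√(p² − 2mr)) dφ; equivalently ĝ = σ g̃ + s'⊗s' with s' = (a p sin²θ/√(p² − 2mr)) dφ. -/

import Mathlib

/-!
Since `√Δ = 2R − r + m`, squaring and using `Δ = r² − 2mr + a²` gives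
`r = R + m + (m² − a²)/(4R)`, which is the stated coordinate change, and its derivative
`1 − (m² − a²)/(4R²)` is again `√Δ / R`; hence `(p²/Δ) dr² = (p²/R²) dR²`. The angular part
rests on `Δ = (p² − 2mr) + a² sin²θ`: dividing by `p² − 2mr` splits the `dφ²` coefficient into
the flat term `R² sin²θ` and the square of the coefficient of `s`, all scaled by `σ = p²/R²`.
-/

open Matrix

section MetricAlgebra

variable {α : Type*} [CommRing α]

theorem vecMulVec_vecCons_zero_zero (x : α) :
    vecMulVec ![0, 0, x] ![0, 0, x] = diagonal ![0, 0, x * x] := by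
  ext i j
  fin_cases i <;> fin_cases j <;> simp [vecMulVec_apply, diagonal]

theorem diagonal_eq_smul_add_vecMulVec {σ d₀ d₁ d₂ e₀ e₁ e₂ x : α}
    (h₀ : d₀ = σ * e₀) (h₁ : d₁ = σ * e₁) (h₂ : d₂ = σ * (e₂ + x * x)) :
    diagonal ![d₀, d₁, d₂] =
      σ • (diagonal ![e₀, e₁, e₂] + vecMulVec ![0, 0, x] ![0, 0, x]) := by
  rw [vecMulVec_vecCons_zero_zero, diagonal_add, ← diagonal_smul]
  congr 1
  ext i
  fin_cases i <;> simp [h₀, h₁, h₂]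

theorem diagonal_eq_smul_diagonal_add_vecMulVec {σ d₀ d₁ d₂ e₀ e₁ e₂ x : α}
    (h₀ : d₀ = σ * e₀) (h₁ : d₁ = σ * e₁) (h₂ : d₂ = σ * e₂ + x * x) :
    diagonal ![d₀, d₁, d₂] =
      σ • diagonal ![e₀, e₁, e₂] + vecMulVec ![0, 0, x] ![0, 0, x] := by
  rw [vecMulVec_vecCons_zero_zero, ← diagonal_smul, diagonal_add]
  congr 1
  ext i
  fin_cases i <;> simp [h₀, h₁, h₂]

end MetricAlgebra

theorem eq_add_add_div_of_sq_eq {m a r R : ℝ} (hR : R ≠ 0)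
    (h : (2 * R - r + m) ^ 2 = r ^ 2 - 2 * m * r + a ^ 2) :
    r = R + m + (m ^ 2 - a ^ 2) / (4 * R) := by
  field_simp
  linear_combination -h

theorem add_add_div_eq_mul {m a R : ℝ} (hR : R ≠ 0) :
    R + m + (m ^ 2 - a ^ 2) / (4 * R) =
      R * ((1 + m / (2 * R)) ^ 2 - a ^ 2 / (4 * R ^ 2)) := by
  field_simp
  ring

theorem hasDerivAt_add_add_div (m c : ℝ) {R : ℝ} (hR : R ≠ 0) :
    HasDerivAt (fun R' : ℝ => R' + m + c / (4 * R')) (1 - c / (4 * R ^ 2)) R := by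
  have h := ((hasDerivAt_id' R).add_const m).add
    ((hasDerivAt_const R c).div ((hasDerivAt_id' R).const_mul 4) (by simpa using hR))
  refine h.congr_deriv ?_
  field_simp
  ring

theorem sq_sub_add_sq_eq_sub_add_sin_sq (m a r θ : ℝ) :
    r ^ 2 - 2 * m * r + a ^ 2 =
      r ^ 2 + a ^ 2 * Real.cos θ ^ 2 - 2 * m * r + a ^ 2 * Real.sin θ ^ 2 := by
  linear_combination -a ^ 2 * Real.sin_sq_add_cos_sq θ

theorem div_mul_div_sqrt_sq {Δ : ℝ} (hΔ : 0 < Δ) (p R : ℝ) :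
    p / Δ * (Real.sqrt Δ / R) ^ 2 = p / R ^ 2 := by
  rw [div_pow, Real.sq_sqrt hΔ.le]
  field_simp

theorem mul_add_div_eq_div_sq_mul_add_mul_self {q R : ℝ} (hq : 0 < q) (hR : R ≠ 0)
    (p a t : ℝ) :
    p * (q + a ^ 2 * t) * t / q =
      p / R ^ 2 * (R ^ 2 * t + a * R * t / Real.sqrt q * (a * R * t / Real.sqrt q)) := by
  rw [div_mul_div_comm, Real.mul_self_sqrt hq.le]
  field_simp

theorem mul_add_div_eq_div_sq_mul_add_sqrt_mul_self {p q R : ℝ} (hp : 0 ≤ p) (hq : 0 < q)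
    (hR : R ≠ 0) (a t : ℝ) :
    p * (q + a ^ 2 * t) * t / q =
      p / R ^ 2 * (R ^ 2 * t) +
        a * Real.sqrt p * t / Real.sqrt q * (a * Real.sqrt p * t / Real.sqrt q) := by
  rw [div_mul_div_comm, Real.mul_self_sqrt hq.le,
    show a * √p * t * (a * √p * t) = a ^ 2 * (√p * √p) * t ^ 2 by ring, Real.mul_self_sqrt hp]
  field_simp

theorem stmt12_general (m a : ℝ) :
    ∀ r θ Δ p2 : ℝ, m < r →
      Δ = r ^ 2 - 2 * m * r + a ^ 2 → 0 < Δ →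
      p2 = r ^ 2 + a ^ 2 * Real.cos θ ^ 2 → 0 < p2 - 2 * m * r →
      ∀ R : ℝ, R = (Real.sqrt Δ + r - m) / 2 →
      r = R * ((1 + m / (2 * R)) ^ 2 - a ^ 2 / (4 * R ^ 2)) ∧
      HasDerivAt (fun R' : ℝ => R' + m + (m ^ 2 - a ^ 2) / (4 * R'))
        (Real.sqrt Δ / R) R ∧
      ∀ ghat gflat : Matrix (Fin 3) (Fin 3) ℝ, ∀ σ : ℝ, ∀ s s' : Fin 3 → ℝ,
        ghat = Matrix.diagonal ![p2 / Δ * (Real.sqrt Δ / R) ^ 2, p2,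
          p2 * Δ * Real.sin θ ^ 2 / (p2 - 2 * m * r)] →
        gflat = Matrix.diagonal ![1, R ^ 2, R ^ 2 * Real.sin θ ^ 2] →
        σ = p2 / R ^ 2 →
        s = ![0, 0, a * R * Real.sin θ ^ 2 / Real.sqrt (p2 - 2 * m * r)] →
        s' = ![0, 0, a * Real.sqrt p2 * Real.sin θ ^ 2 /
          Real.sqrt (p2 - 2 * m * r)] →
        ghat = σ • (gflat + Matrix.vecMulVec s s) ∧
          ghat = σ • gflat + Matrix.vecMulVec s' s' := by
  intro r θ Δ p2 hmr hΔ hΔ0 hp2 hq R hR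
  have hsqrtΔ : Real.sqrt Δ = 2 * R - r + m := by linarith
  have hR_pos : 0 < R := by
    rw [hR]
    linarith [Real.sqrt_nonneg Δ]
  have hR0 := hR_pos.ne'
  have hr : r = R + m + (m ^ 2 - a ^ 2) / (4 * R) :=
    eq_add_add_div_of_sq_eq hR0 (by rw [← hsqrtΔ, Real.sq_sqrt hΔ0.le, hΔ])
  refine ⟨hr.trans (add_add_div_eq_mul hR0), ?_, ?_⟩
  · convert hasDerivAt_add_add_div m (m ^ 2 - a ^ 2) hR0 using 1
    rw [hsqrtΔ, hr]
    field_simp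
    ring
  intro ghat gflat σ s s' hg hgf hσ hs hs'
  subst hg hgf hσ hs hs'
  have hp2_nonneg : 0 ≤ p2 := hp2 ▸ by positivity
  have hΔq : Δ = p2 - 2 * m * r + a ^ 2 * Real.sin θ ^ 2 := by
    rw [hΔ, hp2, sq_sub_add_sq_eq_sub_add_sin_sq m a r θ]
  rw [hΔq, div_mul_div_sqrt_sq (hΔq ▸ hΔ0)]
  exact ⟨diagonal_eq_smul_add_vecMulVec (mul_one _).symm (by field_simp)
      (mul_add_div_eq_div_sq_mul_add_mul_self hq hR0 _ _ _),
    diagonal_eq_smul_diagonal_add_vecMulVec (mul_one _).symm (by field_simp)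
      (mul_add_div_eq_div_sq_mul_add_sqrt_mul_self hp2_nonneg hq hR0 _ _)⟩

/-- In coordinates `(R, θ, φ)` obtained from Boyer–Lindquist `r`
via `r = R[(1 + m/(2R))² − a²/(4R²)]` (i.e. `R = (√Δ + r − m)/2`, with
`dr/dR = √Δ/R`), the stationary Kerr space metric
`ĝ = (p²/Δ) dr² + p² dθ² + (p²Δ/(p² − 2mr)) sin²θ dφ²`, `p² = r² + a²cos²θ`,
equals `σ (g̃ + s⊗s)` where `g̃ = dR² + R² dθ² + R² sin²θ dφ²` is flat,
`σ = p²/R²` and `s = (a R sin²θ/√(p² − 2mr)) dφ`; equivalently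
`ĝ = σ g̃ + s'⊗s'` with `s' = (a p sin²θ/√(p² − 2mr)) dφ`. -/
theorem stmt12 (m a : ℝ) (hm : 0 < m) :
    ∀ r θ Δ p2 : ℝ, m < r →
      Δ = r ^ 2 - 2 * m * r + a ^ 2 → 0 < Δ →
      p2 = r ^ 2 + a ^ 2 * Real.cos θ ^ 2 → 0 < p2 - 2 * m * r →
      ∀ R : ℝ, R = (Real.sqrt Δ + r - m) / 2 →
      r = R * ((1 + m / (2 * R)) ^ 2 - a ^ 2 / (4 * R ^ 2)) ∧
      HasDerivAt (fun R' : ℝ => R' + m + (m ^ 2 - a ^ 2) / (4 * R'))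
        (Real.sqrt Δ / R) R ∧
      ∀ ghat gflat : Matrix (Fin 3) (Fin 3) ℝ, ∀ σ : ℝ, ∀ s s' : Fin 3 → ℝ,
        ghat = Matrix.diagonal ![p2 / Δ * (Real.sqrt Δ / R) ^ 2, p2,
          p2 * Δ * Real.sin θ ^ 2 / (p2 - 2 * m * r)] →
        gflat = Matrix.diagonal ![1, R ^ 2, R ^ 2 * Real.sin θ ^ 2] →
        σ = p2 / R ^ 2 →
        s = ![0, 0, a * R * Real.sin θ ^ 2 / Real.sqrt (p2 - 2 * m * r)] →
        s' = ![0, 0, a * Real.sqrt p2 * Real.sin θ ^ 2 /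
          Real.sqrt (p2 - 2 * m * r)] →
        ghat = σ • (gflat + Matrix.vecMulVec s s) ∧
          ghat = σ • gflat + Matrix.vecMulVec s' s' :=
  stmt12_general m a
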